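/- arXiv:1109.6060 — 2 statements merged into one kernel-verified Lean document; each statement's English description precedes it below -/
import Mathlib

section
/- For every integer m ≥ 4, real numbers 0 < v_1 < v_2 < ⋯ < v_m, nonnegative real numbers A_1, …, A_m, and every h ∈ [1, m−3], the inequality Δ_h ≤ c_m* · v_h · A_h + Δ_{h+1} holds. -/
/-!
Unfolding one step of the recursions `U_h = min (A_h) (U_{h+1}) + S_{h+1}`, `S_h = A_h + S_{h+1}`
and `σ_h = v_{h-1} + 2 σ_{h-1}` (where `σ_k = csum v k`), the `S_{h+1}` terms cancel and
`Δ_h - c* v_h A_h - Δ_{h+1} = P (min A_h U_{h+1} - A_h) + Q (min A_h U_{h+1} - U_{h+1})`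
with `P = c* (v_h + σ_{h-1}) - (v_{h-1} + σ_{h-1})` and `Q = (1 - c*) (v_h + σ_h)`.
Here `P ≥ 0` because `c* ≥ c_{h-1}`, and `Q ≥ 0` because every `c_i ≤ 1`, so both terms are `≤ 0`.
-/

/-- `csum v i = ∑_{j=1}^{i-1} 2^{j-1} v_{i-j}` (empty sum is 0). -/
noncomputable def csum (v : ℕ → ℝ) (i : ℕ) : ℝ :=
  ∑ j ∈ Finset.Icc 1 (i - 1), (2 : ℝ) ^ (j - 1) * v (i - j)

/-- `cval v i = c_i = (v_i + csum v i) / (v_{i+1} + csum v i)`. -/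
noncomputable def cval (v : ℕ → ℝ) (i : ℕ) : ℝ :=
  (v i + csum v i) / (v (i + 1) + csum v i)

/-- `cstar v m = c_m^* = max_{1 ≤ i ≤ m-1} c_i`. -/
noncomputable def cstar (v : ℕ → ℝ) (m : ℕ) : ℝ :=
  if hne : (Finset.Icc 1 (m - 1)).Nonempty then (Finset.Icc 1 (m - 1)).sup' hne (cval v)
  else 0

/-- `Sfun A m h = S_h = ∑_{ℓ=h}^{m} A_ℓ`. -/
noncomputable def Sfun (A : ℕ → ℝ) (m h : ℕ) : ℝ := ∑ ℓ ∈ Finset.Icc h m, A ℓ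

/-- `Urec A m h = U_h`, defined by `U_{m-1} = A_m` and
`U_h = min (A_h) (U_{h+1}) + S_{h+1}` for `h ≤ m-2`. -/
noncomputable def Urec (A : ℕ → ℝ) (m h : ℕ) : ℝ :=
  if hle : m - 1 ≤ h then A m
  else min (A h) (Urec A m (h + 1)) + Sfun A m (h + 1)
termination_by m - 1 - h
decreasing_by omega

/-- `Delta v A m h = Δ_h`,
`Δ_h = [(v_h + ∑_{j=1}^{h-2} 2^{j-1} v_{h-1-j}) - c_m^* (v_{h-1} + ∑_{j=1}^{h-2} 2^{j-1} v_{h-1-j})] U_h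
     + [(v_{h-1} + ∑_{j=1}^{h-2} 2^{j-1} v_{h-1-j}) - c_m^* ∑_{j=1}^{h-2} 2^{j-1} v_{h-1-j}] S_h
     + ∑_{ℓ=h+1}^{m-1} (v_ℓ - v_{ℓ-1}) U_ℓ`, where `∑_{j=1}^{h-2} 2^{j-1} v_{h-1-j} = csum v (h-1)`. -/
noncomputable def Delta (v A : ℕ → ℝ) (m h : ℕ) : ℝ :=
  ((v h + csum v (h - 1)) - cstar v m * (v (h - 1) + csum v (h - 1))) * Urec A m h +
  ((v (h - 1) + csum v (h - 1)) - cstar v m * csum v (h - 1)) * Sfun A m h +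
  ∑ ℓ ∈ Finset.Icc (h + 1) (m - 1), (v ℓ - v (ℓ - 1)) * Urec A m ℓ

lemma pos_of_pos_of_lt_succ {v : ℕ → ℝ} {m : ℕ} (hv1 : 0 < v 1)
    (hv : ∀ i, 1 ≤ i → i < m → v i < v (i + 1)) {i : ℕ} (hi : 1 ≤ i) (him : i ≤ m) : 0 < v i := by
  induction i, hi using Nat.le_induction with
  | base => exact hv1
  | succ n hn ih => exact (ih (by omega)).trans (hv n hn (by omega))

lemma sum_Icc_eq_add_sum_Icc_succ {M : Type*} [AddCommMonoid M] (f : ℕ → M) {a b : ℕ}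
    (hab : a ≤ b) : ∑ i ∈ Finset.Icc a b, f i = f a + ∑ i ∈ Finset.Icc (a + 1) b, f i := by
  rw [Finset.Icc_add_one_left_eq_Ioc, Finset.add_sum_Ioc_eq_sum_Icc hab]

lemma csum_eq_sum_range (v : ℕ → ℝ) (n : ℕ) :
    csum v n = ∑ j ∈ Finset.range (n - 1), (2 : ℝ) ^ j * v (n - 1 - j) := by
  rw [csum, ← Finset.Ico_add_one_right_eq_Icc, Finset.sum_Ico_eq_sum_range]
  refine Finset.sum_congr (by congr 1) fun j _ => ?_
  congr 2 <;> omega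

lemma csum_succ {v : ℕ → ℝ} (hv0 : v 0 = 0) (k : ℕ) :
    csum v (k + 1) = v k + 2 * csum v k := by
  rcases k with _ | n
  · simp [csum, hv0]
  · simp only [csum_eq_sum_range, Nat.add_sub_cancel, Finset.sum_range_succ', Finset.mul_sum]
    simp [pow_succ, mul_comm, mul_left_comm, add_comm]

lemma csum_nonneg {v : ℕ → ℝ} {n : ℕ} (hv : ∀ i, 1 ≤ i → i < n → 0 ≤ v i) :
    0 ≤ csum v n :=
  Finset.sum_nonneg fun j hj => by
    rw [Finset.mem_Icc] at hj
    exact mul_nonneg (by positivity) (hv _ (by omega) (by omega))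

lemma cval_le_one {v : ℕ → ℝ} {i : ℕ} (hle : v i ≤ v (i + 1)) (hd : 0 ≤ v (i + 1) + csum v i) :
    cval v i ≤ 1 :=
  div_le_one_of_le₀ (by linarith) hd

lemma cval_le_cstar (v : ℕ → ℝ) {m i : ℕ} (hi : i ∈ Finset.Icc 1 (m - 1)) :
    cval v i ≤ cstar v m := by
  rw [cstar, dif_pos ⟨i, hi⟩]
  exact Finset.le_sup' _ hi

lemma cstar_le_one {v : ℕ → ℝ} {m : ℕ} (hc : ∀ i ∈ Finset.Icc 1 (m - 1), cval v i ≤ 1) :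
    cstar v m ≤ 1 := by
  rw [cstar]
  split_ifs with hne
  · exact Finset.sup'_le hne _ hc
  · exact zero_le_one

/-- `c_m^* ≥ c_{h-1}`, cleared of denominators; for `h = 1` the left side vanishes. -/
lemma add_csum_le_cstar_mul {v : ℕ → ℝ} {m h : ℕ} (hv0 : v 0 = 0)
    (hpos : ∀ i, 1 ≤ i → i ≤ m → 0 < v i) (h1 : 1 ≤ h) (hm : h < m) :
    v (h - 1) + csum v (h - 1) ≤ cstar v m * (v h + csum v (h - 1)) := by
  have hcsum : ∀ n ≤ m, 0 ≤ csum v n := fun n hn =>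
    csum_nonneg fun j hj hjn => (hpos j hj (by omega)).le
  have hd : 0 < v h + csum v (h - 1) :=
    add_pos_of_pos_of_nonneg (hpos h h1 hm.le) (hcsum _ (by omega))
  rcases h1.eq_or_lt with rfl | h2
  · have hc0 : 0 ≤ cstar v m :=
      (div_nonneg (add_nonneg (hpos 1 le_rfl hm.le).le (hcsum 1 hm.le))
        (add_nonneg (hpos 2 one_le_two hm).le (hcsum 1 hm.le))).trans
        (cval_le_cstar v (Finset.mem_Icc.2 ⟨le_rfl, by omega⟩))
    simpa [csum, hv0] using mul_nonneg hc0 (hpos 1 le_rfl hm.le).le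
  · have hc := cval_le_cstar v (m := m) (i := h - 1) (Finset.mem_Icc.2 ⟨by omega, by omega⟩)
    rw [cval, Nat.sub_add_cancel h1, div_le_iff₀ hd] at hc
    exact hc

lemma Urec_of_lt (A : ℕ → ℝ) {m h : ℕ} (hh : h < m - 1) :
    Urec A m h = min (A h) (Urec A m (h + 1)) + Sfun A m (h + 1) := by
  rw [Urec, dif_neg (by omega)]

lemma Sfun_eq_add (A : ℕ → ℝ) {m h : ℕ} (hh : h ≤ m) :
    Sfun A m h = A h + Sfun A m (h + 1) :=
  sum_Icc_eq_add_sum_Icc_succ A hh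

lemma Delta_eq_add_Delta_succ (v A : ℕ → ℝ) {m h : ℕ} (hv0 : v 0 = 0) (h1 : 1 ≤ h)
    (hm : h + 2 ≤ m) :
    Delta v A m h = cstar v m * v h * A h + Delta v A m (h + 1)
      + (cstar v m * (v h + csum v (h - 1)) - (v (h - 1) + csum v (h - 1)))
        * (min (A h) (Urec A m (h + 1)) - A h)
      + (1 - cstar v m) * (v h + csum v h) * (min (A h) (Urec A m (h + 1)) - Urec A m (h + 1)) := by
  obtain ⟨k, rfl⟩ : ∃ k, h = k + 1 := ⟨h - 1, by omega⟩
  simp only [Delta, Nat.add_sub_cancel, csum_succ hv0, Urec_of_lt A (show k + 1 < m - 1 by omega),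
    Sfun_eq_add A (show k + 1 ≤ m by omega),
    sum_Icc_eq_add_sum_Icc_succ _ (show k + 1 + 1 ≤ m - 1 by omega)]
  ring

theorem stmt3_general (m : ℕ) (v : ℕ → ℝ) (hv0 : v 0 = 0)
    (hv1 : 0 < v 1) (hv : ∀ i, 1 ≤ i → i < m → v i < v (i + 1))
    (A : ℕ → ℝ)
    (h : ℕ) (hh : h ∈ Finset.Icc 1 (m - 3)) :
    Delta v A m h ≤ cstar v m * v h * A h + Delta v A m (h + 1) := by
  obtain ⟨h1, hhm⟩ := Finset.mem_Icc.mp hh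
  have hpos : ∀ i, 1 ≤ i → i ≤ m → 0 < v i := fun _ hi him => pos_of_pos_of_lt_succ hv1 hv hi him
  have hcsum : ∀ i ≤ m, 0 ≤ csum v i := fun i him =>
    csum_nonneg fun j hj hji => (hpos j hj (by omega)).le
  have hc1 : cstar v m ≤ 1 := cstar_le_one fun i hi => by
    rw [Finset.mem_Icc] at hi
    exact cval_le_one (hv i hi.1 (by omega)).le
      (add_nonneg (hpos (i + 1) (by omega) (by omega)).le (hcsum i (by omega)))
  have hP := add_csum_le_cstar_mul hv0 hpos h1 (by omega)
  have hQ : 0 ≤ (1 - cstar v m) * (v h + csum v h) :=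
    mul_nonneg (sub_nonneg.2 hc1) (add_nonneg (hpos h h1 (by omega)).le (hcsum h (by omega)))
  rw [Delta_eq_add_Delta_succ v A hv0 h1 (by omega)]
  have hminA := mul_nonpos_of_nonneg_of_nonpos (sub_nonneg.2 hP)
    (sub_nonpos.2 (min_le_left (A h) (Urec A m (h + 1))))
  have hminU := mul_nonpos_of_nonneg_of_nonpos hQ
    (sub_nonpos.2 (min_le_right (A h) (Urec A m (h + 1))))
  linarith

/-- Lemma 4.3: for every `m ≥ 4`, reals `0 < v 1 < ⋯ < v m` with `v 0 = 0`,
nonnegative reals `A_1, …, A_m`, and every `h ∈ [1, m-3]`,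
`Δ_h ≤ c_m^* v_h A_h + Δ_{h+1}`. -/
theorem stmt3 (m : ℕ) (hm : 4 ≤ m) (v : ℕ → ℝ) (hv0 : v 0 = 0)
    (hv1 : 0 < v 1) (hv : ∀ i, 1 ≤ i → i < m → v i < v (i + 1))
    (A : ℕ → ℝ) (hA : ∀ i ∈ Finset.Icc 1 m, 0 ≤ A i)
    (h : ℕ) (hh : h ∈ Finset.Icc 1 (m - 3)) :
    Delta v A m h ≤ cstar v m * v h * A h + Delta v A m (h + 1) :=
  stmt3_general m v hv0 hv1 hv A h hh
end

section
/- Let m ≥ 3 be an integer, let A_1, …, A_m be nonnegative real numbers, and let D_1, …, D_{m−1} be real numbers such that D_ℓ ≤ S_{ℓ+1} for every ℓ ∈ [1, m−1] and Σ_{ℓ=h}^{m−1} D_ℓ ≤ S_h for every h ∈ [1, m−1]. Then for every h ∈ [1, m−1], the partial sum satisfies Σ_{ℓ=h}^{m−1} D_ℓ ≤ U_h. -/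
/-- `Ufun A m h = U_h`: for `h = m-1` it is `A_m`; otherwise it is the minimum of the
quantities (i) `S_{h+1} + ⋯ + S_{j+1} + S_{j+1}` for `j ∈ [h, m-3]` (with `S_{j+1}`
counted twice), (ii) `S_{h+1} + S_{h+2} + ⋯ + S_m`, and (iii) `S_h`. -/
noncomputable def Ufun (A : ℕ → ℝ) (m h : ℕ) : ℝ :=
  if h = m - 1 then A m
  else
    Finset.fold min
      (min (∑ ℓ ∈ Finset.Icc (h + 1) m, Sfun A m ℓ) (Sfun A m h))
      (fun j => (∑ ℓ ∈ Finset.Icc (h + 1) (j + 1), Sfun A m ℓ) + Sfun A m (j + 1))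
      (Finset.Icc h (m - 3))

open Finset

theorem sum_Icc_add_sum_Icc_succ {M : Type*} [AddCommMonoid M] (f : ℕ → M) {a b c : ℕ}
    (hab : a ≤ b + 1) (hbc : b ≤ c) :
    ∑ i ∈ Icc a b, f i + ∑ i ∈ Icc (b + 1) c, f i = ∑ i ∈ Icc a c, f i := by
  simpa only [← Ico_add_one_right_eq_Icc] using sum_Ico_consecutive f hab (by omega)

theorem sum_Icc_le_sum_Icc_succ {M : Type*} [AddCommMonoid M] [PartialOrder M]
    [IsOrderedAddMonoid M] {f g : ℕ → M} {a b : ℕ} (hfg : ∀ i ∈ Icc a b, f i ≤ g (i + 1)) :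
    ∑ i ∈ Icc a b, f i ≤ ∑ i ∈ Icc (a + 1) (b + 1), g i := by
  rw [← map_add_right_Icc, sum_map]
  exact sum_le_sum hfg

theorem Sfun_self (A : ℕ → ℝ) (m : ℕ) : Sfun A m m = A m := by
  simp [Sfun]

theorem stmt5_general (m : ℕ) (A : ℕ → ℝ) (D : ℕ → ℝ)
    (hD1 : ∀ ℓ ∈ Finset.Icc 1 (m - 1), D ℓ ≤ Sfun A m (ℓ + 1))
    (hD2 : ∀ h ∈ Finset.Icc 1 (m - 1), ∑ ℓ ∈ Finset.Icc h (m - 1), D ℓ ≤ Sfun A m h) :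
    ∀ h ∈ Finset.Icc 1 (m - 1), ∑ ℓ ∈ Finset.Icc h (m - 1), D ℓ ≤ Ufun A m h := by
  intro h hh
  obtain ⟨h_pos, h_le⟩ := mem_Icc.mp hh
  have m_pred_succ : m - 1 + 1 = m := by omega
  have shift (j : ℕ) (hj : j ≤ m - 1) :
      ∑ ℓ ∈ Icc h j, D ℓ ≤ ∑ ℓ ∈ Icc (h + 1) (j + 1), Sfun A m ℓ :=
    sum_Icc_le_sum_Icc_succ fun ℓ hℓ =>
      hD1 ℓ (mem_Icc.mpr ⟨h_pos.trans (mem_Icc.mp hℓ).1, (mem_Icc.mp hℓ).2.trans hj⟩)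
  by_cases h_top : h = m - 1
  · subst h_top
    simpa [Ufun, m_pred_succ, Sfun_self] using hD1 (m - 1) hh
  · rw [Ufun, if_neg h_top, le_fold_min]
    refine ⟨le_min ?_ (hD2 h hh), fun j hj => ?_⟩
    · simpa only [m_pred_succ] using shift (m - 1) le_rfl
    · obtain ⟨h_le_j, j_le⟩ := mem_Icc.mp hj
      rw [← sum_Icc_add_sum_Icc_succ D (by omega : h ≤ j + 1) (by omega : j ≤ m - 1)]
      exact add_le_add (shift j (by omega)) (hD2 (j + 1) (mem_Icc.mpr ⟨by omega, by omega⟩))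

/-- Let `m ≥ 3`, let `A_1, …, A_m` be nonnegative reals, and let `D_1, …, D_{m-1}` be
reals with `D_ℓ ≤ S_{ℓ+1}` for every `ℓ ∈ [1, m-1]` and `∑_{ℓ=h}^{m-1} D_ℓ ≤ S_h` for
every `h ∈ [1, m-1]`. Then `∑_{ℓ=h}^{m-1} D_ℓ ≤ U_h` for every `h ∈ [1, m-1]`. -/
theorem stmt5 (m : ℕ) (hm : 3 ≤ m) (A : ℕ → ℝ)
    (hA : ∀ i ∈ Finset.Icc 1 m, 0 ≤ A i) (D : ℕ → ℝ)
    (hD1 : ∀ ℓ ∈ Finset.Icc 1 (m - 1), D ℓ ≤ Sfun A m (ℓ + 1))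
    (hD2 : ∀ h ∈ Finset.Icc 1 (m - 1), ∑ ℓ ∈ Finset.Icc h (m - 1), D ℓ ≤ Sfun A m h) :
    ∀ h ∈ Finset.Icc 1 (m - 1), ∑ ℓ ∈ Finset.Icc h (m - 1), D ℓ ≤ Ufun A m h :=
  stmt5_general m A D hD1 hD2
end
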